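/- Let I be a finite index set and for each y ∈ I let (Y_k^y)_{k≥1} be independent families of i.i.d. uniform draws from a four-element set, with a fixed symbol e_y for each y, and let n_y(m) count occurrences of e_y among the first m draws of the family y. For any family of ℕ-valued random variables (Φ_y)_{y∈I} that is independent of all the (Y_k^y), E[ ∏_{y∈I} |{m ∈ ℕ : n_y(m) = Φ_y}| ] ≤ 4^{|I|}. -/

import Mathlib

/-!
Fix one family and write `n(m)` for the running count of `e`. If `n(m) = ℓ` and the draw at
time `m` is `e`, then `n(m') > ℓ` for all `m' > m`, so the events
`{n(m) = ℓ, Z m = e}` are pairwise disjoint. Since `Z m` is independent of `n(m)`, the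
probability of such an event is `q · ℙ(n(m) = ℓ)`, where `q = ℙ(Z m = e)`; summing over `m`
gives `q · E[#{m | n(m) = ℓ}] ≤ 1`. Distinct families are independent, so the expected product
over the finitely many families factorizes, and since `Φ` is independent of all draws the bound
for each fixed value of `Φ` survives averaging over `Φ`.
-/

open MeasureTheory ProbabilityTheory ENNReal

namespace ProbabilityTheory

variable {Ω : Type*} {mΩ : MeasurableSpace Ω} {P : Measure Ω}

lemma iIndepFun.curry {ι κ 𝓧 : Type*} [MeasurableSpace 𝓧] {X : ι → κ → Ω → 𝓧}
    (mX : ∀ i j, Measurable (X i j)) (h : iIndepFun (fun p : ι × κ ↦ X p.1 p.2) P) :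
    iIndepFun (fun i ω ↦ (X i · ω)) P := by
  have := h.isProbabilityMeasure
  have : ∀ i j, IsProbabilityMeasure (P.map (X i j)) :=
    fun i j ↦ Measure.isProbabilityMeasure_map (mX i j).aemeasurable
  have hblock (i : ι) : P.map (fun ω j ↦ X i j ω) = Measure.infinitePi fun j ↦ P.map (X i j) :=
    (h.precomp (Prod.mk_right_injective i)).map_fun_eq_infinitePi_map (mX i)
  rw [iIndepFun_iff_map_fun_eq_infinitePi_map fun i ↦ measurable_pi_lambda _ (mX i)]
  calc P.map (fun ω i j ↦ X i j ω)
      = (P.map fun ω (p : ι × κ) ↦ X p.1 p.2 ω).map (MeasurableEquiv.curry ι κ 𝓧) := by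
        rw [Measure.map_map (MeasurableEquiv.measurable _)
          (measurable_pi_lambda (fun ω (p : ι × κ) ↦ X p.1 p.2 ω) fun p ↦ mX p.1 p.2)]
        rfl
    _ = Measure.infinitePi fun i ↦ P.map (fun ω j ↦ X i j ω) := by
        rw [h.map_fun_eq_infinitePi_map (X := fun p : ι × κ ↦ X p.1 p.2) fun p ↦ mX p.1 p.2,
          Measure.infinitePi_map_curry (fun i j ↦ P.map (X i j))]
        simp_rw [hblock]

lemma lintegral_comp_le_of_indepFun {β γ : Type*} [MeasurableSpace β] [MeasurableSpace γ]
    [IsProbabilityMeasure P] {X : Ω → β} {Z : Ω → γ} (hX : Measurable X) (hZ : Measurable Z)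
    (hXZ : IndepFun X Z P) {f : β × γ → ℝ≥0∞} (hf : Measurable f) {C : ℝ≥0∞}
    (hC : ∀ b, ∫⁻ ω, f (b, Z ω) ∂P ≤ C) : ∫⁻ ω, f (X ω, Z ω) ∂P ≤ C :=
  calc ∫⁻ ω, f (X ω, Z ω) ∂P
      = ∫⁻ b, ∫⁻ c, f (b, c) ∂P.map Z ∂P.map X := by
        rw [← lintegral_prod _ hf.aemeasurable, ← hXZ.map_prod_eq_prod_map_map hX.aemeasurable
          hZ.aemeasurable, lintegral_map hf (hX.prodMk hZ)]
    _ ≤ ∫⁻ _, C ∂P.map X := lintegral_mono fun b ↦ by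
        rw [lintegral_map (f := fun c ↦ f (b, c)) (hf.comp measurable_prodMk_left) hZ]
        exact hC b
    _ = C := by simp [Measure.map_apply hX MeasurableSet.univ]

end ProbabilityTheory

section OccupationTime

variable {α : Type*} [DecidableEq α]

def runningCount (e : α) (m : ℕ) (x : ℕ → α) : ℕ :=
  ((Finset.range m).filter (fun k => x k = e)).card

noncomputable def occupationTime (e : α) (ℓ : ℕ) (x : ℕ → α) : ℝ≥0∞ :=
  ∑' m, if runningCount e m x = ℓ then 1 else 0

lemma runningCount_eq_sum (e : α) (m : ℕ) (x : ℕ → α) :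
    runningCount e m x = ∑ k ∈ Finset.range m, if x k = e then 1 else 0 :=
  Finset.card_filter _ _

lemma runningCount_mono (e : α) (x : ℕ → α) : Monotone fun m ↦ runningCount e m x :=
  fun _ _ h ↦ Finset.card_le_card (Finset.filter_subset_filter _ (Finset.range_subset_range.2 h))

lemma runningCount_succ_of_eq {e : α} {x : ℕ → α} {m : ℕ} (h : x m = e) :
    runningCount e (m + 1) x = runningCount e m x + 1 := by
  rw [runningCount_eq_sum, runningCount_eq_sum, Finset.sum_range_succ, if_pos h]

lemma pairwise_disjoint_runningCount_eq_and_apply_eq (e : α) (ℓ : ℕ) :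
    Pairwise (Function.onFun Disjoint
      fun m ↦ {x : ℕ → α | runningCount e m x = ℓ ∧ x m = e}) := by
  suffices h : ∀ i j, i < j → ∀ x : ℕ → α, runningCount e i x = ℓ → x i = e →
      runningCount e j x ≠ ℓ by
    intro i j hij
    rw [Function.onFun, Set.disjoint_left]
    rintro x ⟨hi, hxi⟩ ⟨hj, hxj⟩
    rcases hij.lt_or_gt with hlt | hlt
    · exact h i j hlt x hi hxi hj
    · exact h j i hlt x hj hxj hi
  intro i j hij x hi hxi hj
  have hle : runningCount e (i + 1) x ≤ runningCount e j x := runningCount_mono e x hij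
  rw [runningCount_succ_of_eq hxi] at hle
  omega

variable [MeasurableSpace α] [MeasurableSingletonClass α]

lemma measurable_ite_apply_eq {ι : Type*} (k : ι) (e : α) :
    Measurable fun t : ι → α ↦ if t k = e then (1 : ℕ) else 0 :=
  Measurable.ite (measurable_pi_apply (X := fun _ ↦ α) k (measurableSet_singleton e))
    measurable_const measurable_const

lemma measurable_runningCount (e : α) (m : ℕ) : Measurable (runningCount e m) := by
  simp_rw [funext (runningCount_eq_sum e m)]
  exact Finset.measurable_sum _ fun k _ ↦ measurable_ite_apply_eq k e

lemma measurable_occupationTime (e : α) (ℓ : ℕ) : Measurable (occupationTime e ℓ) :=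
  Measurable.tsum fun m ↦ Measurable.ite
    (measurable_runningCount e m (measurableSet_singleton ℓ)) measurable_const measurable_const

variable {Ω : Type*} {mΩ : MeasurableSpace Ω} {μ : Measure Ω}

lemma indepFun_runningCount {Z : ℕ → Ω → α} (hZ : ∀ k, Measurable (Z k))
    (hindep : iIndepFun Z μ) (e : α) (m : ℕ) :
    IndepFun (fun ω ↦ runningCount e m (Z · ω)) (Z m) μ := by
  have hfin := hindep.indepFun_finset (Finset.range m) {m} (by simp) hZ
  convert hfin.comp (φ := fun t ↦ ∑ k : Finset.range m, if t k = e then (1 : ℕ) else 0)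
    (ψ := fun t ↦ t ⟨m, Finset.mem_singleton_self m⟩) ?_
    (measurable_pi_apply (X := fun _ ↦ α) _) using 1
  · ext ω
    rw [Function.comp_apply, runningCount_eq_sum, ← Finset.sum_coe_sort]
  · rfl
  · exact Finset.measurable_sum _ fun k _ ↦ measurable_ite_apply_eq k e

theorem lintegral_occupationTime_le {Z : ℕ → Ω → α} (hZ : ∀ k, Measurable (Z k))
    (hindep : iIndepFun Z μ) {e : α} {q : ℝ≥0∞} (hq : ∀ k, μ {ω | Z k ω = e} = q) (ℓ : ℕ) :
    ∫⁻ ω, occupationTime e ℓ (Z · ω) ∂μ ≤ q⁻¹ := by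
  have := hindep.isProbabilityMeasure
  have hZv : Measurable fun ω k ↦ Z k ω := measurable_pi_lambda _ hZ
  set A : ℕ → Set Ω := fun m ↦ {ω | runningCount e m (Z · ω) = ℓ}
  have hA (m : ℕ) : MeasurableSet (A m) :=
    (measurable_runningCount e m).comp hZv (measurableSet_singleton ℓ)
  have hlintegral : ∫⁻ ω, occupationTime e ℓ (Z · ω) ∂μ = ∑' m, μ (A m) := by
    have hindicator (ω : Ω) : occupationTime e ℓ (Z · ω) = ∑' m, (A m).indicator 1 ω := by
      simp only [occupationTime, Set.indicator_apply, A, Set.mem_ofPred_eq, Pi.one_apply]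
    simp_rw [hindicator]
    rw [lintegral_tsum fun m ↦ (measurable_one.indicator (hA m)).aemeasurable]
    simp_rw [lintegral_indicator_one (hA _)]
  rw [hlintegral, ENNReal.le_inv_iff_mul_le, ← ENNReal.tsum_mul_right]
  calc ∑' m, μ (A m) * q = ∑' m, μ (A m ∩ {ω | Z m ω = e}) := by
        congr with m
        rw [← hq m]
        exact ((indepFun_runningCount hZ hindep e m).measure_inter_preimage_eq_mul _ _
          (measurableSet_singleton ℓ) (measurableSet_singleton e)).symm
    _ = μ (⋃ m, A m ∩ {ω | Z m ω = e}) :=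
        (measure_iUnion
          (fun i j hij ↦ (pairwise_disjoint_runningCount_eq_and_apply_eq e ℓ hij).preimage
            (fun ω k ↦ Z k ω))
          fun m ↦ (hA m).inter (hZ m (measurableSet_singleton e))).symm
    _ ≤ 1 := prob_le_one

theorem lintegral_prod_occupationTime_le {I : Type*} [Fintype I] {Z : I → ℕ → Ω → α}
    (hZ : ∀ y k, Measurable (Z y k)) (hindep : iIndepFun (fun p : I × ℕ ↦ Z p.1 p.2) μ)
    {e : I → α} {q : ℝ≥0∞} (hq : ∀ y k, μ {ω | Z y k ω = e y} = q) (φ : I → ℕ) :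
    ∫⁻ ω, ∏ y, occupationTime (e y) (φ y) (Z y · ω) ∂μ ≤ q⁻¹ ^ Fintype.card I := by
  rw [lintegral_prod_eq_prod_lintegral_of_indepFun _
    (fun y ω ↦ occupationTime (e y) (φ y) (Z y · ω))
    ((hindep.curry hZ).comp _ fun y ↦ measurable_occupationTime (e y) (φ y))
    fun y ↦ (measurable_occupationTime _ _).comp (measurable_pi_lambda _ (hZ y))]
  exact Finset.prod_le_pow_card _ _ _ fun y _ ↦ lintegral_occupationTime_le (hZ y)
    (hindep.precomp (g := Prod.mk y) (Prod.mk_right_injective y)) (hq y) (φ y)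

end OccupationTime

/-- Single-cycle entropy bound: for independent families of i.i.d. uniform draws from a
four-element set indexed by a finite set `I`, and random levels `Φ_y` independent of all
the draws, the expected product over `y ∈ I` of the number of times `m` at which the
running count of a fixed symbol `e y` equals `Φ y` is at most `4^|I|`. -/
theorem stmt4 {Ω : Type*} [MeasureSpace Ω] [IsProbabilityMeasure (ℙ : Measure Ω)]
    {I : Type*} [Fintype I]
    (Y : I → ℕ → Ω → Fin 4) (e : I → Fin 4)
    (hmeas : ∀ y k, Measurable (Y y k))
    (hunif : ∀ y k (v : Fin 4), ℙ {ω | Y y k ω = v} = 1 / 4)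
    (hindep : iIndepFun (fun p : I × ℕ => Y p.1 p.2) ℙ)
    (Φ : I → Ω → ℕ) (hΦmeas : ∀ y, Measurable (Φ y))
    (hΦindep : IndepFun (fun ω (y : I) => Φ y ω) (fun ω (p : I × ℕ) => Y p.1 p.2 ω) ℙ) :
    ∫⁻ ω, (∏ y : I, ∑' m : ℕ,
        if ((Finset.range m).filter (fun k => Y y k ω = e y)).card = Φ y ω
        then (1 : ℝ≥0∞) else 0) ∂ℙ
      ≤ 4 ^ Fintype.card I := by
  have hΦvec : Measurable fun ω (y : I) ↦ Φ y ω := measurable_pi_lambda _ hΦmeas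
  have hYvec : Measurable fun ω (p : I × ℕ) ↦ Y p.1 p.2 ω :=
    measurable_pi_lambda _ fun p ↦ hmeas p.1 p.2
  have hf : Measurable fun p : (I → ℕ) × (I × ℕ → Fin 4) ↦
      ∏ y, occupationTime (e y) (p.1 y) fun k ↦ p.2 (y, k) :=
    measurable_from_prod_countable_right fun φ ↦ Finset.measurable_prod _ fun y _ ↦
      (measurable_occupationTime _ _).comp (measurable_pi_lambda _ fun k ↦ measurable_pi_apply _)
  refine lintegral_comp_le_of_indepFun hΦvec hYvec hΦindep hf fun φ ↦ ?_
  simpa using lintegral_prod_occupationTime_le hmeas hindep (fun y k ↦ hunif y k (e y)) φ
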